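/- arXiv:2203.10891 — 2 statements merged into one kernel-verified Lean document; each statement's English description precedes it below -/
import Mathlib

section
/- Let (T,d,ρ,u) be a plane ℝ-tree and let p be a Borel probability measure on T. If A is a random variable with values in T×[0,1] and law p_L, then almost surely p_→(A) = 0. -/
open Set MeasureTheory Filter Metric

/-- The metric segment `[[x,y]]` between `x` and `y`. -/
def geoSeg {T : Type*} [MetricSpace T] (x y : T) : Set T :=
  {z | dist x z + dist z y = dist x y}

/-- `(T,d)` is an `ℝ`-tree: it is geodesic (any two points are joined by a geodesic
segment, which is `geoSeg x y`) and loopless (this segment is the unique arc joining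
`x` and `y`). -/
structure IsRTree (T : Type*) [MetricSpace T] : Prop where
  geodesic : ∀ x y : T, ∃ γ : ℝ → T, γ 0 = x ∧ γ (dist x y) = y ∧
    (∀ s ∈ Icc (0:ℝ) (dist x y), ∀ t ∈ Icc (0:ℝ) (dist x y),
      dist (γ s) (γ t) = |s - t|) ∧
    γ '' Icc (0:ℝ) (dist x y) = geoSeg x y
  loopless : ∀ x y : T, ∀ f : ℝ → T, ContinuousOn f (Icc (0:ℝ) 1) →
    InjOn f (Icc (0:ℝ) 1) → f 0 = x → f 1 = y → f '' Icc (0:ℝ) 1 = geoSeg x y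

/-- The set of connected components of `T \ {x}`. -/
def comps {T : Type*} [MetricSpace T] (x : T) : Set (Set T) :=
  {C | ∃ y, y ≠ x ∧ C = connectedComponentIn ({x}ᶜ) y}

/-- A plane `ℝ`-tree structure on the metric space `T`: `T` is a separable complete
`ℝ`-tree with a root and a balanced angle function `u`.  `cca x y` is the closest
common ancestor of `x` and `y`. -/
structure PlaneRTree (T : Type*) [MetricSpace T] where
  sep : TopologicalSpace.SeparableSpace T
  cpl : CompleteSpace T
  tree : IsRTree T
  root : T
  cca : T → T → T
  cca_mem : ∀ x y : T, cca x y ∈ geoSeg root x ∩ geoSeg root y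
  cca_max : ∀ x y : T, ∀ z ∈ geoSeg root x ∩ geoSeg root y,
    dist root z ≤ dist root (cca x y)
  u : T → T → ℝ
  u_mem : ∀ x y : T, u x y ∈ Icc (0:ℝ) 1
  u_root : ∀ x : T, u x root = 0
  u_self : ∀ x : T, u x x = 0
  u_eq_iff : ∀ x y z : T, y ≠ x → z ≠ x →
    (u x y = u x z ↔ connectedComponentIn ({x}ᶜ) y = connectedComponentIn ({x}ᶜ) z)
  balanced : ∀ x y : T, (comps x).ncard = 2 → u x y = 0 ∨ u x y = 1/2

namespace PlaneRTree

variable {T : Type*} [MetricSpace T]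

open Classical in
/-- The angle `u(x, (y,w))`: it is `u x y` if `x ≠ y`, and `w` if `x = y`. -/
noncomputable def ang (P : PlaneRTree T) (x : T) (β : T × ℝ) : ℝ :=
  if x = β.1 then β.2 else P.u x β.1

/-- `α ↷ β` : `α` is at the left of `β`. -/
def leftOf (P : PlaneRTree T) (α β : T × ℝ) : Prop :=
  P.ang (P.cca α.1 β.1) α < P.ang (P.cca α.1 β.1) β

/-- `α → β` : `β` is in front of `α`. -/
def frontOf (P : PlaneRTree T) (α β : T × ℝ) : Prop :=
  α.1 ∈ geoSeg P.root β.1 ∧ P.ang α.1 β = α.2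

/-- The contour relation `≺` : `α ≺ β` iff `α ↷ β` or `α → β`. -/
def precOf (P : PlaneRTree T) (α β : T × ℝ) : Prop :=
  P.leftOf α β ∨ P.frontOf α β

end PlaneRTree

namespace PlaneRTree

variable {T : Type*} [MetricSpace T] [MeasurableSpace T] [BorelSpace T]

/-- The measure `p_L`, product of `p` with Lebesgue measure on `[0,1]`. -/
noncomputable def pL (p : Measure T) : Measure (T × ℝ) :=
  p.prod (volume.restrict (Icc (0:ℝ) 1))

/-- `p_↶(α) = p_L {β : β ↷ α}`, the mass at the left of `α`. -/
noncomputable def pleft (P : PlaneRTree T) (p : Measure T) (α : T × ℝ) : ℝ :=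
  (pL p {β : T × ℝ | P.leftOf β α}).toReal

/-- `p_→(α) = p_L {β : α → β}`, the mass in front of `α`. -/
noncomputable def pfront (P : PlaneRTree T) (p : Measure T) (α : T × ℝ) : ℝ :=
  (pL p {β : T × ℝ | P.frontOf α β}).toReal

/-- `p_↷(α) = p_L {β : α ↷ β}`, the mass at the right of `α`. -/
noncomputable def pright (P : PlaneRTree T) (p : Measure T) (α : T × ℝ) : ℝ :=
  (pL p {β : T × ℝ | P.leftOf α β}).toReal

end PlaneRTree


/-!
Write `α = (x, v)`. Apart from the null set `{(x, v)}`, the points in front of `α` are the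
`(y, w)` with `y ≠ x` and `u(x, y) = v`; these `y` form an open set `angleLevel x v`, and for
fixed `x` these sets are pairwise disjoint, so only countably many of them have positive mass.
When `x` is neither the root nor a branch point, `T ∖ {x}` has at most two components, so by
balance `p_→(x, v) > 0` forces `v ∈ {0, 1/2}`. Branch points are countable in a separable
`ℝ`-tree, since each one is the median of three points of a countable dense set. Hence
`p_→ > 0` only on `(T × {0, 1/2}) ∪ ⋃_{x root or branch point} {x} × (countable)`,
a `p_L`-null set.
-/

section RTree

variable {T : Type*} [MetricSpace T]

@[simp] lemma left_mem_geoSeg (x y : T) : x ∈ geoSeg x y := by simp [geoSeg]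

@[simp] lemma right_mem_geoSeg (x y : T) : y ∈ geoSeg x y := by simp [geoSeg]

lemma dist_le_of_mem_geoSeg {x y z : T} (hz : z ∈ geoSeg x y) : dist x z ≤ dist x y := by
  have : dist x z + dist z y = dist x y := hz
  linarith [dist_nonneg (x := z) (y := y)]

def branchPoints (T : Type*) [MetricSpace T] : Set T :=
  {x | ∃ a b c : T, a ≠ x ∧ b ≠ x ∧ c ≠ x ∧
    connectedComponentIn {x}ᶜ a ≠ connectedComponentIn {x}ᶜ b ∧
    connectedComponentIn {x}ᶜ b ≠ connectedComponentIn {x}ᶜ c ∧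
    connectedComponentIn {x}ᶜ a ≠ connectedComponentIn {x}ᶜ c}

namespace IsRTree

variable (h : IsRTree T)
include h

lemma isPreconnected_geoSeg (x y : T) : IsPreconnected (geoSeg x y) := by
  obtain ⟨γ, -, -, hiso, him⟩ := h.geodesic x y
  have hγ : LipschitzOnWith 1 γ (Icc 0 (dist x y)) :=
    LipschitzOnWith.of_dist_le_mul fun s hs t ht => by simp [hiso s hs t ht, Real.dist_eq]
  exact him ▸ isPreconnected_Icc.image γ hγ.continuousOn

lemma eq_of_mem_geoSeg_of_dist_eq {x y z z' : T} (hz : z ∈ geoSeg x y)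
    (hz' : z' ∈ geoSeg x y) (hd : dist x z = dist x z') : z = z' := by
  obtain ⟨γ, h0, -, hiso, him⟩ := h.geodesic x y
  have h0mem : (0 : ℝ) ∈ Icc 0 (dist x y) := ⟨le_rfl, dist_nonneg⟩
  have hdist : ∀ s ∈ Icc 0 (dist x y), dist x (γ s) = s := fun s hs => by
    rw [← h0, hiso 0 h0mem s hs, zero_sub, abs_neg, abs_of_nonneg hs.1]
  rw [← him] at hz hz'
  obtain ⟨s, hs, rfl⟩ := hz
  obtain ⟨s', hs', rfl⟩ := hz'
  rw [hdist s hs, hdist s' hs'] at hd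
  rw [hd]

lemma subsingleton_geoSeg_inter (x y z : T) :
    (geoSeg x y ∩ geoSeg y z ∩ geoSeg x z).Subsingleton := by
  rintro m ⟨⟨hxy, hyz⟩, hxz⟩ m' ⟨⟨hxy', hyz'⟩, hxz'⟩
  refine h.eq_of_mem_geoSeg_of_dist_eq hxy hxy' ?_
  simp only [geoSeg, mem_ofPred_eq] at hxy hyz hxz hxy' hyz' hxz'
  linarith [dist_comm m y, dist_comm m' y]

lemma mem_geoSeg_of_connectedComponentIn_ne {x a b : T}
    (hab : connectedComponentIn {x}ᶜ a ≠ connectedComponentIn {x}ᶜ b) : x ∈ geoSeg a b := by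
  by_contra hx
  have hsub : geoSeg a b ⊆ {x}ᶜ := fun z hz (e : z = x) => hx (e ▸ hz)
  exact hab (connectedComponentIn_eq
    ((h.isPreconnected_geoSeg a b).subset_connectedComponentIn (left_mem_geoSeg a b) hsub
      (right_mem_geoSeg a b)))

lemma ball_subset_connectedComponentIn (x y : T) :
    ball y (dist x y) ⊆ connectedComponentIn {x}ᶜ y := by
  intro z hz
  have hsub : geoSeg y z ⊆ {x}ᶜ := fun w hw (e : w = x) => by
    have := dist_le_of_mem_geoSeg hw
    rw [mem_ball, dist_comm] at hz
    rw [e, dist_comm] at this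
    linarith
  exact (h.isPreconnected_geoSeg y z).subset_connectedComponentIn (left_mem_geoSeg y z) hsub
    (right_mem_geoSeg y z)

lemma isOpen_connectedComponentIn (x y : T) : IsOpen (connectedComponentIn {x}ᶜ y) := by
  refine isOpen_iff.2 fun z hz => ?_
  have hzx : z ≠ x := connectedComponentIn_subset _ _ hz
  exact ⟨dist x z, dist_pos.2 hzx.symm,
    connectedComponentIn_eq hz ▸ h.ball_subset_connectedComponentIn x z⟩

/-- Each branch point is the median of three points of a countable dense set. -/
lemma countable_branchPoints [TopologicalSpace.SeparableSpace T] :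
    (branchPoints T).Countable := by
  obtain ⟨D, hDc, hDd⟩ := TopologicalSpace.exists_countable_dense T
  have hdense : ∀ {x a : T}, a ≠ x →
      ∃ d ∈ D, connectedComponentIn {x}ᶜ d = connectedComponentIn {x}ᶜ a := fun {x a} ha => by
    obtain ⟨d, hdD, hd⟩ := hDd.exists_mem_open (h.isOpen_connectedComponentIn x a)
      ⟨a, mem_connectedComponentIn ha⟩
    exact ⟨d, hdD, connectedComponentIn_eq hd |>.symm⟩
  have hcover : branchPoints T ⊆
      ⋃ p ∈ D, ⋃ q ∈ D, ⋃ r ∈ D, geoSeg p q ∩ geoSeg q r ∩ geoSeg p r := by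
    rintro x ⟨a, b, c, ha, hb, hc, hab, hbc, hac⟩
    obtain ⟨p, hpD, hpa⟩ := hdense ha
    obtain ⟨q, hqD, hqb⟩ := hdense hb
    obtain ⟨r, hrD, hrc⟩ := hdense hc
    simp only [mem_iUnion]
    refine ⟨p, hpD, q, hqD, r, hrD, ⟨?_, ?_⟩, ?_⟩ <;>
      apply h.mem_geoSeg_of_connectedComponentIn_ne <;> simpa [hpa, hqb, hrc]
  exact (hDc.biUnion fun p _ => hDc.biUnion fun q _ => hDc.biUnion fun r _ =>
    (h.subsingleton_geoSeg_inter p q r).countable).mono hcover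

end IsRTree

end RTree

namespace PlaneRTree

section ProductMeasure

variable {T : Type*} [MeasurableSpace T]

lemma pL_prod_univ (p : Measure T) (s : Set T) : pL p (s ×ˢ univ) = p s := by
  simp [pL, Measure.prod_prod]

lemma pL_prod_eq_zero_of_countable (p : Measure T) (s : Set T) {t : Set ℝ}
    (ht : t.Countable) : pL p (s ×ˢ t) = 0 := by
  simp [pL, Measure.prod_prod, ht.measure_zero]

end ProductMeasure

variable {T : Type*} [MetricSpace T]

def angleLevel (P : PlaneRTree T) (x : T) (v : ℝ) : Set T := {y | y ≠ x ∧ P.u x y = v}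

lemma isOpen_angleLevel (P : PlaneRTree T) (x : T) (v : ℝ) : IsOpen (P.angleLevel x v) := by
  refine isOpen_iff.2 ?_
  rintro y ⟨hyx, rfl⟩
  refine ⟨dist x y, dist_pos.2 hyx.symm, fun z hz => ?_⟩
  have hz' := P.tree.ball_subset_connectedComponentIn x y hz
  have hzx : z ≠ x := connectedComponentIn_subset _ _ hz'
  exact ⟨hzx, (P.u_eq_iff x z y hzx hyx).2 (connectedComponentIn_eq hz').symm⟩

/-- Away from the root and the branch points, `T \ {x}` has exactly two components, one of them
containing the root, where `u x` vanishes. -/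
lemma u_eq_zero_or_eq_half (P : PlaneRTree T) {x y : T} (hx : x ∉ branchPoints T)
    (hroot : x ≠ P.root) (hyx : y ≠ x) : P.u x y = 0 ∨ P.u x y = 1 / 2 := by
  by_cases hc : connectedComponentIn {x}ᶜ y = connectedComponentIn {x}ᶜ P.root
  · exact .inl (((P.u_eq_iff x y P.root hyx hroot.symm).2 hc).trans (P.u_root x))
  refine P.balanced x y ?_
  suffices comps x = {connectedComponentIn {x}ᶜ y, connectedComponentIn {x}ᶜ P.root} by
    rw [this, ncard_pair hc]
  ext C
  constructor
  · rintro ⟨a, hax, rfl⟩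
    by_contra hC
    simp only [mem_insert_iff, mem_singleton_iff, not_or] at hC
    exact hx ⟨a, y, P.root, hax, hyx, hroot.symm, hC.1, hc, hC.2⟩
  · rintro (rfl | rfl)
    exacts [⟨y, hyx, rfl⟩, ⟨P.root, hroot.symm, rfl⟩]

variable [MeasurableSpace T]

lemma pL_frontOf_le (P : PlaneRTree T) (p : Measure T) (α : T × ℝ) :
    pL p {β | P.frontOf α β} ≤ p (P.angleLevel α.1 α.2) := by
  have hsub : {β | P.frontOf α β} ⊆ {α.1} ×ˢ {α.2} ∪ P.angleLevel α.1 α.2 ×ˢ univ := by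
    rintro ⟨y, w⟩ ⟨-, hang⟩
    by_cases hxy : α.1 = y
    · simp only [ang, if_pos hxy] at hang
      exact .inl ⟨hxy.symm, hang⟩
    · simp only [ang, if_neg hxy] at hang
      exact .inr ⟨⟨Ne.symm hxy, hang⟩, trivial⟩
  calc pL p {β | P.frontOf α β}
      ≤ pL p ({α.1} ×ˢ {α.2}) + pL p (P.angleLevel α.1 α.2 ×ˢ univ) :=
        (measure_mono hsub).trans (measure_union_le _ _)
    _ = p (P.angleLevel α.1 α.2) := by
        rw [pL_prod_eq_zero_of_countable p _ (countable_singleton _), pL_prod_univ, zero_add]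

lemma pfront_ne_zero_cases (P : PlaneRTree T) (p : Measure T) {α : T × ℝ}
    (hα : P.pfront p α ≠ 0) :
    α.2 ∈ ({0, 1 / 2} : Set ℝ) ∨
      α.1 ∈ insert P.root (branchPoints T) ∧ 0 < p (P.angleLevel α.1 α.2) := by
  have hpos : 0 < p (P.angleLevel α.1 α.2) :=
    (pos_iff_ne_zero.2 fun h0 => hα (by simp [pfront, h0])).trans_le (P.pL_frontOf_le p α)
  by_cases hx : α.1 = P.root ∨ α.1 ∈ branchPoints T
  · exact .inr ⟨hx, hpos⟩
  rw [not_or] at hx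
  obtain ⟨y, hyx, hyv⟩ := nonempty_of_measure_ne_zero hpos.ne'
  exact .inl (hyv ▸ P.u_eq_zero_or_eq_half hx.2 hx.1 hyx)

variable [BorelSpace T]

lemma countable_setOf_measure_angleLevel_pos (P : PlaneRTree T) (p : Measure T) [SFinite p]
    (x : T) : {v : ℝ | 0 < p (P.angleLevel x v)}.Countable :=
  Measure.countable_meas_pos_of_disjoint_iUnion
    (fun v => (P.isOpen_angleLevel x v).measurableSet)
    (fun _ _ hvv' => disjoint_left.2 fun _ hy hy' => hvv' (hy.2.symm.trans hy'.2))

lemma ae_pL_pfront_eq_zero (P : PlaneRTree T) (p : Measure T) [SFinite p] :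
    ∀ᵐ α ∂pL p, P.pfront p α = 0 := by
  have := P.sep
  have hbranch := (P.tree.countable_branchPoints).insert P.root
  refine ae_iff.2 (measure_mono_null (fun α hα => P.pfront_ne_zero_cases p hα) ?_)
  refine measure_union_null ?_ ?_
  · exact measure_mono_null (fun α (hα : α.2 ∈ _) => mem_prod.2 ⟨mem_univ _, hα⟩)
      (pL_prod_eq_zero_of_countable p univ ((countable_singleton (1 / 2 : ℝ)).insert 0))
  · have hcover : {α : T × ℝ | α.1 ∈ insert P.root (branchPoints T) ∧
        0 < p (P.angleLevel α.1 α.2)} ⊆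
        ⋃ x ∈ insert P.root (branchPoints T), {x} ×ˢ {v | 0 < p (P.angleLevel x v)} :=
      fun α hα => mem_biUnion hα.1 ⟨rfl, hα.2⟩
    refine measure_mono_null hcover ((measure_biUnion_null_iff hbranch).2 fun x _ => ?_)
    exact pL_prod_eq_zero_of_countable p _ (P.countable_setOf_measure_angleLevel_pos p x)

end PlaneRTree

theorem pfront_ae_eq_zero_general {T : Type*} [MetricSpace T]
    [MeasurableSpace T] [BorelSpace T] (P : PlaneRTree T)
    (p : Measure T) [IsProbabilityMeasure p]
    {Ω : Type*} [MeasurableSpace Ω] (μ : Measure Ω)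
    (A : Ω → T × ℝ) (hA : Measurable A)
    (hlaw : Measure.map A μ = PlaneRTree.pL p) :
    ∀ᵐ ω ∂μ, P.pfront p (A ω) = 0 :=
  ae_of_ae_map hA.aemeasurable (hlaw ▸ P.ae_pL_pfront_eq_zero p)

/-- If `A` is a random variable with law `p_L`, then almost surely `p_→(A) = 0`. -/
theorem pfront_ae_eq_zero {T : Type*} [MetricSpace T]
    [MeasurableSpace T] [BorelSpace T] (P : PlaneRTree T)
    (p : Measure T) [IsProbabilityMeasure p]
    {Ω : Type*} [MeasurableSpace Ω] (μ : Measure Ω) [IsProbabilityMeasure μ]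
    (A : Ω → T × ℝ) (hA : Measurable A)
    (hlaw : Measure.map A μ = PlaneRTree.pL p) :
    ∀ᵐ ω ∂μ, P.pfront p (A ω) = 0 :=
  pfront_ae_eq_zero_general P p μ A hA hlaw
end

section
/- Let (T,d,ρ,u) be a plane ℝ-tree. Then for every α ∈ T×[0,1], the three sets {β ∈ T×[0,1] : β ↷ α}, {β ∈ T×[0,1] : α → β} and {β ∈ T×[0,1] : α ↷ β} are Borel subsets of T×[0,1] (with the product topology of the metric topology on T and the standard topology on [0,1]). -/
open Set MeasureTheory Filter Metric

/-! Write `α = (x, v)`, `β = (y, w)` and `q = cca x y`, the point where `[[ρ, y]]` leaves the spine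
`[[ρ, x]]`; `α ↷ β` compares `u(q, α)` with `u(q, β)`. Off the spine, `q` and `u(q, y)` are locally
constant in `y`, since a tree has unique arcs. On the spine `q = y`, and `u(y, x) = 1/2` except at
countably many `y`: by balancedness each exception has a third branch, these branches are disjoint
open sets, and `T` is separable. Hence both angles are continuous on the spine (after a change on a
countable set) and off it, so they are Borel. The front relation is the same argument with `q = x`,
together with the closedness of `{y | x ∈ [[ρ, y]]}`. -/

open Topology

section GeodesicSegments

variable {T : Type*} [MetricSpace T]

theorem mem_geoSeg_iff {a b z : T} : z ∈ geoSeg a b ↔ dist a z + dist z b = dist a b := Iff.rfl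

theorem left_mem_geoSeg_s12 (a b : T) : a ∈ geoSeg a b := by simp [mem_geoSeg_iff]

theorem right_mem_geoSeg_s12 (a b : T) : b ∈ geoSeg a b := by simp [mem_geoSeg_iff]

theorem geoSeg_comm (a b : T) : geoSeg a b = geoSeg b a := by
  ext z
  rw [mem_geoSeg_iff, mem_geoSeg_iff, dist_comm b z, dist_comm z a, dist_comm b a, add_comm]

theorem geoSeg_self (a : T) : geoSeg a a = {a} := by
  ext z
  rw [mem_geoSeg_iff, dist_self, dist_comm z a, ← two_mul, mul_eq_zero, dist_eq_zero,
    mem_singleton_iff]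
  norm_num [eq_comm]

theorem geoSeg_subset {a b m : T} (hm : m ∈ geoSeg a b) : geoSeg a m ⊆ geoSeg a b := by
  intro z hz
  rw [mem_geoSeg_iff] at *
  linarith [dist_triangle z m b, dist_triangle a z b]

theorem IsRTree.exists_continuous_geodesic (h : IsRTree T) (a b : T) :
    ∃ γ : ℝ → T, Continuous γ ∧ γ 0 = a ∧ γ (dist a b) = b ∧
      (∀ s ∈ Icc 0 (dist a b), ∀ t ∈ Icc 0 (dist a b), dist (γ s) (γ t) = |s - t|) ∧
      (∀ s ∈ Icc 0 (dist a b), dist a (γ s) = s) ∧ γ '' Icc 0 (dist a b) = geoSeg a b := by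
  obtain ⟨γ, h0, h1, hiso, him⟩ := h.geodesic a b
  have hd : (0 : ℝ) ≤ dist a b := dist_nonneg
  have hcont : ContinuousOn γ (Icc 0 (dist a b)) :=
    (LipschitzOnWith.of_dist_le_mul (K := 1) fun s hs t ht => by
      simp [hiso s hs t ht, Real.dist_eq]).continuousOn
  -- extend `γ` by constants outside `[0, dist a b]` to make it continuous everywhere
  set γ' : ℝ → T := fun s => γ (projIcc 0 (dist a b) hd s)
  have hγ' : ∀ s ∈ Icc 0 (dist a b), γ' s = γ s := fun s hs => by
    simp [γ', projIcc_of_mem hd hs]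
  have hiso' :
      ∀ s ∈ Icc 0 (dist a b), ∀ t ∈ Icc 0 (dist a b), dist (γ' s) (γ' t) = |s - t| :=
    fun s hs t ht => by rw [hγ' s hs, hγ' t ht, hiso s hs t ht]
  have hmem0 : (0 : ℝ) ∈ Icc 0 (dist a b) := ⟨le_rfl, hd⟩
  refine ⟨γ', hcont.comp_continuous (continuous_subtype_val.comp continuous_projIcc)
    (fun s => (projIcc _ _ hd s).2), by rw [hγ' 0 hmem0, h0], by rw [hγ' _ ⟨hd, le_rfl⟩, h1],
    hiso', fun s hs => ?_, by rw [image_congr hγ', him]⟩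
  rw [← h0, ← hγ' 0 hmem0, hiso' 0 hmem0 s hs, zero_sub, abs_neg, abs_of_nonneg hs.1]

theorem IsRTree.mem_geoSeg_of_dist_left_le (h : IsRTree T) {a b z z' : T} (hz : z ∈ geoSeg a b)
    (hz' : z' ∈ geoSeg a b) (hle : dist a z ≤ dist a z') : z ∈ geoSeg a z' := by
  obtain ⟨γ, -, -, -, hiso, hpar, him⟩ := h.exists_continuous_geodesic a b
  rw [← him] at hz hz'
  obtain ⟨t, ht, rfl⟩ := hz
  obtain ⟨t', ht', rfl⟩ := hz'
  rw [hpar t ht, hpar t' ht'] at hle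
  rw [mem_geoSeg_iff, hpar t ht, hpar t' ht', hiso t ht t' ht', abs_of_nonpos (by linarith)]
  ring

theorem IsRTree.mem_geoSeg_of_dist_right_le (h : IsRTree T) {a b z z' : T} (hz : z ∈ geoSeg a b)
    (hz' : z' ∈ geoSeg a b) (hle : dist z' b ≤ dist z b) : z ∈ geoSeg a z' := by
  refine h.mem_geoSeg_of_dist_left_le hz hz' ?_
  rw [mem_geoSeg_iff] at hz hz'
  linarith

theorem IsRTree.eq_of_mem_geoSeg_of_dist_eq_s12 (h : IsRTree T) {a b z z' : T}
    (hz : z ∈ geoSeg a b) (hz' : z' ∈ geoSeg a b) (he : dist a z = dist a z') : z = z' := by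
  have h1 := h.mem_geoSeg_of_dist_left_le hz hz' he.le
  rw [mem_geoSeg_iff, he, add_eq_left, dist_eq_zero] at h1
  exact h1

/-- Two arcs issued from a common point and meeting only there form an arc, so by
looplessness their common origin lies on the segment between their ends. -/
theorem IsRTree.mem_geoSeg_of_arcs (h : IsRTree T) {p q : ℝ → T} {l l' : ℝ} (hl : 0 < l)
    (hl' : 0 < l') (hp : Continuous p) (hq : Continuous q) (hpq₀ : p 0 = q 0)
    (hpi : InjOn p (Icc 0 l)) (hqi : InjOn q (Icc 0 l'))
    (hpq : ∀ s ∈ Icc 0 l, ∀ t ∈ Icc 0 l', p s = q t → t = 0) :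
    p 0 ∈ geoSeg (p l) (q l') := by
  classical
  set L := l + l'
  have hL : 0 < L := by positivity
  have hbd : ∀ t ∈ Icc (0 : ℝ) 1, 0 ≤ t * L ∧ t * L ≤ L := fun t ht =>
    ⟨mul_nonneg ht.1 hL.le, mul_le_of_le_one_left hL.le ht.2⟩
  set f : ℝ → T := fun t => if t * L ≤ l then p (l - t * L) else q (t * L - l)
  have hf : Continuous f :=
    continuous_if_le (continuous_id.mul continuous_const) continuous_const
      (hp.comp (continuous_const.sub (continuous_id.mul continuous_const))).continuousOn
      (hq.comp ((continuous_id.mul continuous_const).sub continuous_const)).continuousOn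
      fun t ht => by simp [ht, hpq₀]
  have hinj : InjOn f (Icc 0 1) := by
    intro t ht t' ht' he
    obtain ⟨h0, h1⟩ := hbd t ht
    obtain ⟨h0', h1'⟩ := hbd t' ht'
    refine mul_right_cancel₀ hL.ne' ?_
    simp only [f] at he
    split_ifs at he with h2 h3 h3
    · linarith [hpi ⟨by linarith, by linarith⟩ ⟨by linarith, by linarith⟩ he]
    · linarith [hpq _ ⟨by linarith, by linarith⟩ _ ⟨by linarith, by linarith⟩ he]
    · linarith [hpq _ ⟨by linarith, by linarith⟩ _ ⟨by linarith, by linarith⟩ he.symm]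
    · linarith [hqi ⟨by linarith, by linarith⟩ ⟨by linarith, by linarith⟩ he]
  have hf0 : f 0 = p l := by simp [f, hl.le]
  have hf1 : f 1 = q l' := by simp [f, L, hl', add_sub_cancel_left]
  rw [← h.loopless _ _ f hf.continuousOn hinj hf0 hf1]
  refine ⟨l / L, ⟨by positivity, (div_le_one hL).2 (by linarith)⟩, ?_⟩
  simp [f, div_mul_cancel₀ _ hL.ne']

theorem IsRTree.exists_median (h : IsRTree T) (c a b : T) :
    ∃ m, m ∈ geoSeg c a ∧ m ∈ geoSeg c b ∧ m ∈ geoSeg a b := by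
  obtain ⟨γa, hγa, ha0, ha1, hai, hapar, haim⟩ := h.exists_continuous_geodesic c a
  obtain ⟨γb, hγb, hb0, hb1, hbi, hbpar, hbim⟩ := h.exists_continuous_geodesic c b
  set I := Icc 0 (min (dist c a) (dist c b)) ∩ {t | γa t = γb t}
  have hIb : BddAbove I := bddAbove_Icc.mono inter_subset_left
  have h0I : (0 : ℝ) ∈ I :=
    ⟨⟨le_rfl, le_min dist_nonneg dist_nonneg⟩, ha0.trans hb0.symm⟩
  -- the two geodesics from `c` part at the parameter `t₀`
  set t₀ := sSup I
  obtain ⟨⟨ht₀, ht₀ab⟩, hγt₀⟩ : t₀ ∈ I :=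
    (isClosed_Icc.inter (isClosed_eq hγa hγb)).csSup_mem ⟨0, h0I⟩ hIb
  have hta : t₀ ≤ dist c a := ht₀ab.trans (min_le_left _ _)
  have htb : t₀ ≤ dist c b := ht₀ab.trans (min_le_right _ _)
  refine ⟨γa t₀, haim ▸ mem_image_of_mem _ ⟨ht₀, hta⟩,
    hγt₀ ▸ hbim ▸ mem_image_of_mem _ ⟨ht₀, htb⟩, ?_⟩
  rcases hta.eq_or_lt with hta | hta
  · rw [hta, ha1]
    exact left_mem_geoSeg_s12 a b
  rcases htb.eq_or_lt with htb | htb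
  · rw [hγt₀, htb, hb1]
    exact right_mem_geoSeg_s12 a b
  have hinj : ∀ {γ : ℝ → T} {d : ℝ},
      (∀ s ∈ Icc 0 d, ∀ t ∈ Icc 0 d, dist (γ s) (γ t) = |s - t|) →
      InjOn (fun s => γ (t₀ + s)) (Icc 0 (d - t₀)) := fun hi s hs t ht he => by
    have := hi (t₀ + s) ⟨by linarith [hs.1], by linarith [hs.2]⟩ (t₀ + t)
      ⟨by linarith [ht.1], by linarith [ht.2]⟩
    simp only at he
    rw [he, dist_self, eq_comm, abs_eq_zero] at this
    linarith
  have hmeet : ∀ s ∈ Icc 0 (dist c a - t₀), ∀ t ∈ Icc 0 (dist c b - t₀),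
      γa (t₀ + s) = γb (t₀ + t) → t = 0 := fun s hs t ht he => by
    have hs' : t₀ + s ∈ Icc 0 (dist c a) := ⟨by linarith [hs.1], by linarith [hs.2]⟩
    have ht' : t₀ + t ∈ Icc 0 (dist c b) := ⟨by linarith [ht.1], by linarith [ht.2]⟩
    have hst : s = t := by linarith [hapar _ hs', hbpar _ ht', congrArg (dist c) he]
    subst hst
    have : t₀ + s ≤ t₀ := le_csSup hIb ⟨⟨hs'.1, le_min hs'.2 ht'.2⟩, he⟩
    linarith [hs.1]
  simpa [ha1, hb1] using h.mem_geoSeg_of_arcs (p := fun s => γa (t₀ + s))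
    (q := fun s => γb (t₀ + s)) (sub_pos.2 hta) (sub_pos.2 htb) (by fun_prop) (by fun_prop)
    (by simpa using hγt₀) (hinj hai) (hinj hbi) hmeet

theorem IsRTree.isCompact_geoSeg (h : IsRTree T) (a b : T) : IsCompact (geoSeg a b) := by
  obtain ⟨γ, hγ, -, -, -, -, him⟩ := h.exists_continuous_geodesic a b
  exact him ▸ isCompact_Icc.image hγ

theorem IsRTree.isPreconnected_geoSeg_s12 (h : IsRTree T) (a b : T) :
    IsPreconnected (geoSeg a b) := by
  obtain ⟨γ, hγ, -, -, -, -, him⟩ := h.exists_continuous_geodesic a b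
  exact him ▸ isPreconnected_Icc.image γ hγ.continuousOn

theorem IsRTree.eventually_mem_geoSeg_iff (h : IsRTree T) (a : T) {q w : T} (hw : w ≠ q) :
    ∀ᶠ w' in 𝓝 w, (q ∈ geoSeg a w' ↔ q ∈ geoSeg a w) := by
  have hd : 0 < dist q w := dist_pos.2 hw.symm
  filter_upwards [ball_mem_nhds w (half_pos hd)] with w' hw'
  rw [mem_ball] at hw'
  obtain ⟨m, hm, hm', hmw⟩ := h.exists_median a w w'
  rw [mem_geoSeg_iff] at hmw
  constructor
  · intro hq
    refine geoSeg_subset hm (h.mem_geoSeg_of_dist_right_le hq hm' ?_)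
    linarith [dist_triangle q w' w, dist_nonneg (x := w) (y := m), dist_comm w w']
  · intro hq
    refine geoSeg_subset hm' (h.mem_geoSeg_of_dist_right_le hq hm ?_)
    linarith [dist_nonneg (x := m) (y := w'), dist_comm w m, dist_comm w w']

theorem IsRTree.isClosed_setOf_mem_geoSeg (h : IsRTree T) (a q : T) :
    IsClosed {w | q ∈ geoSeg a w} := by
  rw [← isOpen_compl_iff, isOpen_iff_mem_nhds]
  intro w hw
  have hwq : w ≠ q := by
    rintro rfl
    exact hw (right_mem_geoSeg_s12 a w)
  filter_upwards [h.eventually_mem_geoSeg_iff a hwq] with w' hw'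
  exact fun hq => hw (hw'.1 hq)

/-- Whether `q` lies on `[[y, w]]` is locally constant in `w ≠ q`, hence constant on the
component of `y` in `T \ {q}`. -/
theorem IsRTree.notMem_geoSeg_of_mem_connectedComponentIn (h : IsRTree T) {q y z : T}
    (hy : y ≠ q) (hz : z ∈ connectedComponentIn {q}ᶜ y) : q ∉ geoSeg y z := by
  classical
  have hf : ContinuousOn (fun w => decide (q ∈ geoSeg y w)) {q}ᶜ := fun w hw =>
    (Filter.EventuallyEq.continuousAt (y := decide (q ∈ geoSeg y w)) <|
      (h.eventually_mem_geoSeg_iff y hw).mono fun w' hw' => by simp only [hw']).continuousWithinAt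
  have := isPreconnected_connectedComponentIn.constant
    (hf.mono (connectedComponentIn_subset _ _)) hz (mem_connectedComponentIn hy)
  simpa [geoSeg_self, hy.symm] using this

theorem IsRTree.eq_of_mem_geoSeg_of_mem_geoSeg (h : IsRTree T) {a b w y y' : T}
    (hy : y ∈ geoSeg a b) (hy' : y' ∈ geoSeg a b) (hya : y ∈ geoSeg a w)
    (hyb : y ∈ geoSeg b w) (hya' : y' ∈ geoSeg a w) (hyb' : y' ∈ geoSeg b w) : y = y' := by
  refine h.eq_of_mem_geoSeg_of_dist_eq_s12 hy hy' ?_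
  rw [mem_geoSeg_iff] at *
  linarith [dist_comm b y, dist_comm b y']

end GeodesicSegments

namespace PlaneRTree

variable {T : Type*} [MetricSpace T] (P : PlaneRTree T)

theorem u_eq_iff_notMem_geoSeg {q y z : T} (hy : y ≠ q) (hz : z ≠ q) :
    P.u q y = P.u q z ↔ q ∉ geoSeg y z := by
  rw [P.u_eq_iff q y z hy hz]
  constructor
  · intro hyz
    exact P.tree.notMem_geoSeg_of_mem_connectedComponentIn hy (hyz ▸ mem_connectedComponentIn hz)
  · intro hq
    have := (P.tree.isPreconnected_geoSeg_s12 y z).subset_connectedComponentIn (left_mem_geoSeg_s12 y z)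
      fun w hw (hwq : w = q) => hq (hwq ▸ hw)
    exact connectedComponentIn_eq (this (right_mem_geoSeg_s12 y z))

theorem eventually_u_eq {q y : T} (hy : y ≠ q) : ∀ᶠ y' in 𝓝 y, P.u q y' = P.u q y := by
  filter_upwards [ball_mem_nhds y (dist_pos.2 hy)] with y' hy'
  rw [mem_ball] at hy'
  have hy'q : y' ≠ q := by
    rintro rfl
    exact (dist_comm y' y ▸ hy').false
  refine (P.u_eq_iff_notMem_geoSeg hy'q hy).2 fun hq => ?_
  rw [mem_geoSeg_iff] at hq
  linarith [dist_nonneg (x := y') (y := q), dist_comm q y]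

theorem cca_comm (x y : T) : P.cca x y = P.cca y x :=
  P.tree.eq_of_mem_geoSeg_of_dist_eq_s12 (P.cca_mem x y).1 (P.cca_mem y x).2
    (le_antisymm (P.cca_max y x _ (P.cca_mem x y).symm) (P.cca_max x y _ (P.cca_mem y x).symm))

theorem cca_of_mem {x y : T} (hy : y ∈ geoSeg P.root x) : P.cca x y = y :=
  P.tree.eq_of_mem_geoSeg_of_dist_eq_s12 (P.cca_mem x y).2 (right_mem_geoSeg_s12 _ _)
    (le_antisymm
      (by linarith [mem_geoSeg_iff.1 (P.cca_mem x y).2, dist_nonneg (x := P.cca x y) (y := y)])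
      (P.cca_max x y y ⟨hy, right_mem_geoSeg_s12 _ _⟩))

theorem cca_ne_of_notMem {x y : T} (hy : y ∉ geoSeg P.root x) : P.cca x y ≠ y :=
  fun h => hy (h ▸ (P.cca_mem x y).1)

theorem cca_mem_geoSeg_of_branch {x y y' m : T} (hm : m ∈ geoSeg P.root y)
    (hm' : m ∈ geoSeg P.root y') (hmx : m ∉ geoSeg P.root x) :
    P.cca x y ∈ geoSeg P.root y' := by
  obtain ⟨hcx, hcy⟩ := P.cca_mem x y
  refine geoSeg_subset hm' (P.tree.mem_geoSeg_of_dist_left_le hcy hm ?_)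
  by_contra! hlt
  exact hmx (geoSeg_subset hcx (P.tree.mem_geoSeg_of_dist_left_le hm hcy hlt.le))

theorem cca_eq_of_branch {x y y' m : T} (hm : m ∈ geoSeg P.root y)
    (hm' : m ∈ geoSeg P.root y') (hmx : m ∉ geoSeg P.root x) : P.cca x y = P.cca x y' :=
  P.tree.eq_of_mem_geoSeg_of_dist_eq_s12 (P.cca_mem x y).1 (P.cca_mem x y').1 <| le_antisymm
    (P.cca_max x y' _ ⟨(P.cca_mem x y).1, P.cca_mem_geoSeg_of_branch hm hm' hmx⟩)
    (P.cca_max x y _ ⟨(P.cca_mem x y').1, P.cca_mem_geoSeg_of_branch hm' hm hmx⟩)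

theorem eventually_cca_eq {x y : T} (hy : y ∉ geoSeg P.root x) :
    ∀ᶠ y' in 𝓝 y, P.cca x y' = P.cca x y := by
  obtain ⟨r, hr, hball⟩ := Metric.mem_nhds_iff.1
    ((P.tree.isCompact_geoSeg P.root x).isClosed.isOpen_compl.mem_nhds hy)
  filter_upwards [ball_mem_nhds y hr] with y' hy'
  obtain ⟨m, hm, hm', hmyy'⟩ := P.tree.exists_median P.root y y'
  refine (P.cca_eq_of_branch hm hm' fun hmx => hball ?_ hmx).symm
  rw [mem_ball] at hy' ⊢
  rw [mem_geoSeg_iff] at hmyy'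
  linarith [dist_nonneg (x := m) (y := y'), dist_comm m y, dist_comm y' y]

/-- `w` lies in a third component of `T \ {y}`: since `u y x ≠ u y ρ = 0`, balancedness forces
`deg y ≠ 2` as soon as `u y x ≠ 1/2`. -/
theorem exists_u_ne_of_u_ne_half {x y : T} (hy : y ∈ geoSeg P.root x) (hyρ : y ≠ P.root)
    (hyx : y ≠ x) (hu : P.u y x ≠ 1 / 2) :
    ∃ w, w ≠ y ∧ P.u y w ≠ P.u y P.root ∧ P.u y w ≠ P.u y x := by
  have hxρ : P.u y x ≠ P.u y P.root := by
    rw [Ne, P.u_eq_iff_notMem_geoSeg hyx.symm hyρ.symm, not_not, geoSeg_comm]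
    exact hy
  have hcard : (comps y).ncard ≠ 2 := fun h2 => by
    rcases P.balanced y x h2 with h0 | h0
    · exact hxρ (h0.trans (P.u_root y).symm)
    · exact hu h0
  by_contra! H
  have hcomps : comps y = {connectedComponentIn {y}ᶜ P.root, connectedComponentIn {y}ᶜ x} := by
    ext C
    constructor
    · rintro ⟨w, hw, rfl⟩
      by_cases hwρ : P.u y w = P.u y P.root
      · exact Or.inl ((P.u_eq_iff y w P.root hw hyρ.symm).1 hwρ)
      · exact Or.inr ((P.u_eq_iff y w x hw hyx.symm).1 (H w hw hwρ))
    · rintro (rfl | rfl)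
      exacts [⟨_, hyρ.symm, rfl⟩, ⟨_, hyx.symm, rfl⟩]
  exact hcard (hcomps ▸ ncard_pair fun hc =>
    hxρ ((P.u_eq_iff y x P.root hyx.symm hyρ.symm).2 hc.symm))

theorem countable_setOf_u_ne_half (x : T) :
    {y | y ∈ geoSeg P.root x ∧ y ≠ x ∧ P.u y x ≠ 1 / 2}.Countable := by
  have := P.sep
  set B := {y | y ∈ geoSeg P.root x ∧ y ≠ x ∧ P.u y x ≠ 1 / 2} \ {P.root}
  refine Countable.of_sdiff (t := {P.root}) ?_ (countable_singleton _)
  have key : ∀ y ∈ B, ∃ w, w ≠ y ∧ P.u y w ≠ P.u y P.root ∧ P.u y w ≠ P.u y x :=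
    fun y hy => P.exists_u_ne_of_u_ne_half hy.1.1 hy.2 hy.1.2.1 hy.1.2.2
  choose! w hwy hwρ hwx using key
  set W : T → Set T := fun y => {z | z ≠ y ∧ P.u y z = P.u y (w y)}
  have hW : ∀ y ∈ B, ∀ z ∈ W y, y ∈ geoSeg P.root z ∧ y ∈ geoSeg x z := by
    rintro y hy z ⟨hzy, hz⟩
    have hyρ := (P.u_eq_iff_notMem_geoSeg hzy (Ne.symm hy.2)).not.1 (hz ▸ hwρ y hy)
    have hyx := (P.u_eq_iff_notMem_geoSeg hzy (Ne.symm hy.1.2.1)).not.1 (hz ▸ hwx y hy)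
    rw [not_not, geoSeg_comm] at hyρ hyx
    exact ⟨hyρ, hyx⟩
  refine PairwiseDisjoint.countable_of_isOpen (s := W) ?_ ?_ fun y hy => ⟨w y, hwy y hy, rfl⟩
  · refine fun y hy y' hy' hne => Set.disjoint_left.2 fun z hz hz' => hne ?_
    exact P.tree.eq_of_mem_geoSeg_of_mem_geoSeg hy.1.1 hy'.1.1 (hW y hy z hz).1 (hW y hy z hz).2
      (hW y' hy' z hz').1 (hW y' hy' z hz').2
  · refine fun y _ => isOpen_iff_mem_nhds.2 fun z hz => ?_
    filter_upwards [eventually_ne_nhds hz.1, P.eventually_u_eq hz.1] with z' h1 h2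
    exact ⟨h1, h2.trans hz.2⟩

section Measurability

variable [MeasurableSpace T] [OpensMeasurableSpace T]

theorem measurable_ang_of_retract {A : Set T} {r : T → T} (hA : IsClosed A)
    (hrA : ∀ y ∈ A, r y = y) (hr : ∀ y ∉ A, r y ≠ y ∧ ∀ᶠ y' in 𝓝 y, r y' = r y) :
    Measurable fun β : T × ℝ => P.ang (r β.1) β := by
  classical
  have hon : ContinuousOn (fun β : T × ℝ => P.ang (r β.1) β) (A ×ˢ univ) :=
    continuous_snd.continuousOn.congr fun β hβ => by simp [ang, hrA _ hβ.1]
  have hoff : ContinuousOn (fun β : T × ℝ => P.ang (r β.1) β) (A ×ˢ univ)ᶜ := by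
    rintro ⟨y, w⟩ hβ
    obtain ⟨hry, hev⟩ := hr y fun hy => hβ ⟨hy, trivial⟩
    have hloc := hev.and ((eventually_ne_nhds hry.symm).and (P.eventually_u_eq hry.symm))
    refine ContinuousAt.continuousWithinAt <|
      Filter.EventuallyEq.continuousAt (y := P.ang (r y) (y, w)) ?_
    exact (continuous_fst.tendsto (y, w)).eventually hloc |>.mono fun β ⟨h1, h2, h3⟩ => by
      simp [ang, h1, h2.symm, h3, hry]
  simpa using hon.measurable_piecewise hoff (hA.prod isClosed_univ).measurableSet

theorem measurable_ang_cca (x : T) (v : ℝ) : Measurable fun y => P.ang (P.cca x y) (x, v) := by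
  classical
  set S := geoSeg P.root x
  set ψ : T → ℝ := fun y => P.ang (P.cca x y) (x, v)
  have hE : {y | y ∈ S ∧ ψ y ≠ 1 / 2}.Countable := by
    refine ((P.countable_setOf_u_ne_half x).insert x).mono fun y ⟨hyS, hy⟩ => ?_
    by_cases hyx : y = x
    · exact Or.inl hyx
    · refine Or.inr ⟨hyS, hyx, ?_⟩
      simpa [ψ, ang, P.cca_of_mem hyS, hyx] using hy
  have hoff : ContinuousOn ψ Sᶜ := fun y hy =>
    (Filter.EventuallyEq.continuousAt (y := ψ y) <| (P.eventually_cca_eq hy).mono fun y' h => by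
      simp only [ψ, h]).continuousWithinAt
  have hpw : Measurable (S.piecewise (fun _ => (1 / 2 : ℝ)) ψ) :=
    continuousOn_const.measurable_piecewise hoff
      (P.tree.isCompact_geoSeg _ _).isClosed.measurableSet
  refine measurable_of_measurable_on_compl_countable _ hE ?_
  convert hpw.comp measurable_subtype_coe using 1
  funext ⟨y, hy⟩
  by_cases hyS : y ∈ S
  · simpa [hyS] using hy
  · simp [hyS]

end Measurability

end PlaneRTree

theorem leftOf_frontOf_sets_measurable_general {T : Type*} [MetricSpace T] (P : PlaneRTree T)
    (α : T × ℝ) :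
    MeasurableSet[borel (T × ℝ)] {β : T × ℝ | β.2 ∈ Icc (0:ℝ) 1 ∧ P.leftOf β α} ∧
    MeasurableSet[borel (T × ℝ)] {β : T × ℝ | β.2 ∈ Icc (0:ℝ) 1 ∧ P.frontOf α β} ∧
    MeasurableSet[borel (T × ℝ)] {β : T × ℝ | β.2 ∈ Icc (0:ℝ) 1 ∧ P.leftOf α β} := by
  let : MeasurableSpace T := borel T
  have : BorelSpace T := ⟨rfl⟩
  rw [← (inferInstance : BorelSpace (T × ℝ)).measurable_eq]
  obtain ⟨x, v⟩ := α
  have hIcc : MeasurableSet {β : T × ℝ | β.2 ∈ Icc (0:ℝ) 1} :=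
    measurable_snd measurableSet_Icc
  have hφ := P.measurable_ang_of_retract (P.tree.isCompact_geoSeg P.root x).isClosed
    (fun _ => P.cca_of_mem) fun _ hy => ⟨P.cca_ne_of_notMem hy, P.eventually_cca_eq hy⟩
  have hψ : Measurable fun β : T × ℝ => P.ang (P.cca x β.1) (x, v) :=
    (P.measurable_ang_cca x v).comp measurable_fst
  have hχ := P.measurable_ang_of_retract (r := fun _ => x) isClosed_singleton
    (fun _ hy => hy.symm) fun _ hy => ⟨Ne.symm hy, Filter.Eventually.of_forall fun _ => rfl⟩
  refine ⟨?_, ?_, ?_⟩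
  · convert hIcc.inter (measurableSet_lt hφ hψ) using 1
    ext ⟨y, w⟩
    simp [PlaneRTree.leftOf, P.cca_comm y x]
  · have hspine := (P.tree.isClosed_setOf_mem_geoSeg P.root x).measurableSet
    convert hIcc.inter ((measurable_fst hspine).inter (hχ (measurableSet_singleton v))) using 1
    ext ⟨y, w⟩
    simp [PlaneRTree.frontOf]
  · convert hIcc.inter (measurableSet_lt hψ hφ) using 1
    ext ⟨y, w⟩
    simp [PlaneRTree.leftOf]

/-- For every `α ∈ T × [0,1]`, the sets `{β : β ↷ α}`, `{β : α → β}` and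
`{β : α ↷ β}` are Borel subsets of `T × [0,1]` (for the Borel σ-algebra of the
product topology on `T × ℝ`). -/
theorem leftOf_frontOf_sets_measurable {T : Type*} [MetricSpace T] (P : PlaneRTree T)
    (α : T × ℝ) (hα : α.2 ∈ Icc (0:ℝ) 1) :
    MeasurableSet[borel (T × ℝ)] {β : T × ℝ | β.2 ∈ Icc (0:ℝ) 1 ∧ P.leftOf β α} ∧
    MeasurableSet[borel (T × ℝ)] {β : T × ℝ | β.2 ∈ Icc (0:ℝ) 1 ∧ P.frontOf α β} ∧
    MeasurableSet[borel (T × ℝ)] {β : T × ℝ | β.2 ∈ Icc (0:ℝ) 1 ∧ P.leftOf α β} :=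
  leftOf_frontOf_sets_measurable_general P α
end
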